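/- Let A = [[1, 2, -2 + 4i/√3],[0, 1, -2],[0, 0, 1]] and B = [[1, 2i/√3, -2/3],[√3·i, -1, 0],[-3/2, 0, 0]] in M₃(ℂ), and let H be the Hermitian matrix with rows (0,0,1), (0,1,0), (1,0,0) with associated form ⟨z,w⟩ = w* H z. Set p₁ = (-2/3, 1 - (√3/3)i, 1), p₂ = (-2/3 + (2√3/3)i, -1 - (√3/3)i, 1), p₃ = (-2/3 - (2√3/3)i, 1 - (√3/3)i, 1), p₄ = (-2/3, -1 - (√3/3)i, 1) in ℂ³. Then each of the matrices M₁ = B⁻¹A, M₂ = BA⁻¹, M₃ = BA, M₄ = AB is unipotent, i.e. satisfies tr(Mⱼ) = 3, (Mⱼ − 1)³ = 0 and Mⱼ ≠ 1; moreover each pⱼ is a null vector, ⟨pⱼ,pⱼ⟩ = 0, and Mⱼ·pⱼ = pⱼ for j = 1,2,3,4. -/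

import Mathlib

/-!
For a 3 × 3 matrix `M` with `det M = 1`, Cayley–Hamilton reads
`M³ - (tr M) M² + (tr adj M) M - 1 = 0`, so `tr M = tr adj M = 3` already forces `(M - 1)³ = 0`.
Since `det A = det B = 1`, unipotence of the four words in `A`, `B` reduces to computing two traces
each, and `M ≠ 1` is witnessed by the entry `M 2 0 = -3/2`. Everything else is arithmetic in
`ℚ(√3, i)`, using only `(√3)² = 3` and `i² = -1`.
-/

open Matrix

/-- The Hermitian form matrix of signature (2,1). -/
noncomputable def Hmat : Matrix (Fin 3) (Fin 3) ℂ := !![0,0,1; 0,1,0; 1,0,0]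

/-- The Hermitian form ⟨z,w⟩ = w* H z. -/
noncomputable def herm (z w : Fin 3 → ℂ) : ℂ := star w ⬝ᵥ (Hmat *ᵥ z)

/-- The normalized parabolic generator A of the even subgroup of Δ(3,∞,∞;∞). -/
noncomputable def Amat : Matrix (Fin 3) (Fin 3) ℂ :=
  !![1, 2, -2 + 4 * Complex.I / (Real.sqrt 3 : ℂ);
     0, 1, -2;
     0, 0, 1]

/-- The normalized generator B of the even subgroup of Δ(3,∞,∞;∞). -/
noncomputable def Bmat : Matrix (Fin 3) (Fin 3) ℂ :=
  !![1, 2 * Complex.I / (Real.sqrt 3 : ℂ), -2/3;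
     (Real.sqrt 3 : ℂ) * Complex.I, -1, 0;
     -3/2, 0, 0]

/-- Lift of the parabolic fixed point of B⁻¹A. -/
noncomputable def p₁ : Fin 3 → ℂ :=
  ![-2/3, 1 - ((Real.sqrt 3 : ℂ) / 3) * Complex.I, 1]

/-- Lift of the parabolic fixed point of BA⁻¹. -/
noncomputable def p₂ : Fin 3 → ℂ :=
  ![-2/3 + (2 * (Real.sqrt 3 : ℂ) / 3) * Complex.I,
    -1 - ((Real.sqrt 3 : ℂ) / 3) * Complex.I, 1]

/-- Lift of the parabolic fixed point of BA. -/
noncomputable def p₃ : Fin 3 → ℂ :=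
  ![-2/3 - (2 * (Real.sqrt 3 : ℂ) / 3) * Complex.I,
    1 - ((Real.sqrt 3 : ℂ) / 3) * Complex.I, 1]

/-- Lift of the parabolic fixed point of AB. -/
noncomputable def p₄ : Fin 3 → ℂ :=
  ![-2/3, -1 - ((Real.sqrt 3 : ℂ) / 3) * Complex.I, 1]

/-- A matrix is unipotent when its trace is 3, (M-1)³ = 0 and M ≠ 1. -/
def IsUnipotentNontrivial (M : Matrix (Fin 3) (Fin 3) ℂ) : Prop :=
  Matrix.trace M = 3 ∧ (M - 1) ^ 3 = 0 ∧ M ≠ 1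

open Complex ComplexConjugate

namespace Matrix

variable {R : Type*} [CommRing R]

theorem cayley_hamilton_fin_three (M : Matrix (Fin 3) (Fin 3) R) :
    M ^ 3 - M.trace • M ^ 2 + M.adjugate.trace • M - M.det • 1 = 0 := by
  ext i j
  fin_cases i <;> fin_cases j <;>
    simp [pow_succ, mul_apply, Fin.sum_univ_three, trace_fin_three, adjugate_fin_three,
      det_fin_three] <;> ring

theorem sub_one_pow_three_eq_zero_of_trace_adjugate {M : Matrix (Fin 3) (Fin 3) R}
    (hdet : M.det = 1) (htr : M.trace = 3) (htr_adj : M.adjugate.trace = 3) :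
    (M - 1) ^ 3 = 0 := by
  have hCH := cayley_hamilton_fin_three M
  rw [htr, htr_adj, hdet] at hCH
  simp only [Algebra.smul_def, map_ofNat, map_one, one_mul] at hCH
  rw [← hCH]
  noncomm_ring

end Matrix

theorem isUnipotentNontrivial_of_trace_adjugate {M : Matrix (Fin 3) (Fin 3) ℂ}
    (hdet : M.det = 1) (htr : M.trace = 3) (htr_adj : M.adjugate.trace = 3) (hne : M 2 0 ≠ 0) :
    IsUnipotentNontrivial M :=
  ⟨htr, sub_one_pow_three_eq_zero_of_trace_adjugate hdet htr htr_adj,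
    fun h ↦ hne (by simp [h])⟩

theorem herm_apply (z w : Fin 3 → ℂ) :
    herm z w = z 0 * conj (w 2) + z 1 * conj (w 1) + z 2 * conj (w 0) := by
  simp [herm, Hmat, dotProduct, mulVec, Fin.sum_univ_three]
  ring

theorem ofReal_sqrt_three_sq : ((√3 : ℝ) : ℂ) ^ 2 = 3 := by
  rw [← ofReal_pow, Real.sq_sqrt (by norm_num)]
  norm_num

theorem ofReal_sqrt_three_ne_zero : ((√3 : ℝ) : ℂ) ≠ 0 := by
  simp

theorem Amat_inv : Amat⁻¹ = !![1, -2, -2 - 4 / 3 * ((√3 : ℝ) * I); 0, 1, 2; 0, 0, 1] := by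
  refine inv_eq_left_inv ?_
  ext i j
  fin_cases i <;> fin_cases j <;>
    simp [Amat, mul_apply, Fin.sum_univ_three]
  grind [I_sq, ofReal_sqrt_three_sq, ofReal_sqrt_three_ne_zero]

theorem Bmat_inv : Bmat⁻¹ =
    !![0, 0, -2 / 3; 0, -1, -2 / 3 * ((√3 : ℝ) * I); -3 / 2, -((√3 : ℝ) * I), 1] := by
  refine inv_eq_left_inv ?_
  ext i j
  fin_cases i <;> fin_cases j <;>
    simp [Bmat, mul_apply, Fin.sum_univ_three] <;>
    grind [I_sq, ofReal_sqrt_three_sq, ofReal_sqrt_three_ne_zero]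

theorem det_Amat : Amat.det = 1 := by
  simp [Amat, det_fin_three]

theorem det_Bmat : Bmat.det = 1 := by
  simp [Bmat, det_fin_three]
  norm_num

theorem isUnipotentNontrivial_Bmat_inv_mul_Amat : IsUnipotentNontrivial (Bmat⁻¹ * Amat) := by
  refine isUnipotentNontrivial_of_trace_adjugate (by simp [det_Amat, det_Bmat]) ?_ ?_ ?_ <;>
    simp [Bmat_inv, Amat, trace_fin_three, adjugate_fin_three, mul_apply,
      Fin.sum_univ_three] <;>
    grind [I_sq, ofReal_sqrt_three_sq, ofReal_sqrt_three_ne_zero]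

theorem isUnipotentNontrivial_Bmat_mul_Amat_inv : IsUnipotentNontrivial (Bmat * Amat⁻¹) := by
  refine isUnipotentNontrivial_of_trace_adjugate (by simp [det_Amat, det_Bmat]) ?_ ?_ ?_ <;>
    simp [Bmat, Amat_inv, trace_fin_three, adjugate_fin_three, mul_apply,
      Fin.sum_univ_three] <;>
    grind [I_sq, ofReal_sqrt_three_sq, ofReal_sqrt_three_ne_zero]

theorem isUnipotentNontrivial_Bmat_mul_Amat : IsUnipotentNontrivial (Bmat * Amat) := by
  refine isUnipotentNontrivial_of_trace_adjugate (by simp [det_Amat, det_Bmat]) ?_ ?_ ?_ <;>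
    simp [Bmat, Amat, trace_fin_three, adjugate_fin_three, mul_apply,
      Fin.sum_univ_three] <;>
    grind [I_sq, ofReal_sqrt_three_sq, ofReal_sqrt_three_ne_zero]

theorem isUnipotentNontrivial_Amat_mul_Bmat : IsUnipotentNontrivial (Amat * Bmat) := by
  refine isUnipotentNontrivial_of_trace_adjugate (by simp [det_Amat, det_Bmat]) ?_ ?_ ?_ <;>
    simp [Amat, Bmat, trace_fin_three, adjugate_fin_three, mul_apply,
      Fin.sum_univ_three] <;>
    grind [I_sq, ofReal_sqrt_three_sq, ofReal_sqrt_three_ne_zero]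

theorem herm_p₁_self : herm p₁ p₁ = 0 := by
  simp [herm_apply, p₁, map_div₀, conj_ofReal, map_ofNat]
  grind [I_sq, ofReal_sqrt_three_sq]

theorem herm_p₂_self : herm p₂ p₂ = 0 := by
  simp [herm_apply, p₂, map_div₀, conj_ofReal, map_ofNat]
  grind [I_sq, ofReal_sqrt_three_sq]

theorem herm_p₃_self : herm p₃ p₃ = 0 := by
  simp [herm_apply, p₃, map_div₀, conj_ofReal, map_ofNat]
  grind [I_sq, ofReal_sqrt_three_sq]

theorem herm_p₄_self : herm p₄ p₄ = 0 := by
  simp [herm_apply, p₄, map_div₀, conj_ofReal, map_ofNat]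
  grind [I_sq, ofReal_sqrt_three_sq]

theorem Bmat_inv_mul_Amat_mulVec_p₁ : (Bmat⁻¹ * Amat) *ᵥ p₁ = p₁ := by
  ext i
  fin_cases i <;> simp [Bmat_inv, Amat, p₁, mulVec, dotProduct, Fin.sum_univ_three] <;>
    grind [I_sq, ofReal_sqrt_three_sq, ofReal_sqrt_three_ne_zero]

theorem Bmat_mul_Amat_inv_mulVec_p₂ : (Bmat * Amat⁻¹) *ᵥ p₂ = p₂ := by
  ext i
  fin_cases i <;> simp [Bmat, Amat_inv, p₂, mulVec, dotProduct, Fin.sum_univ_three] <;>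
    grind [I_sq, ofReal_sqrt_three_sq, ofReal_sqrt_three_ne_zero]

theorem Bmat_mul_Amat_mulVec_p₃ : (Bmat * Amat) *ᵥ p₃ = p₃ := by
  ext i
  fin_cases i <;> simp [Bmat, Amat, p₃, mulVec, dotProduct, Fin.sum_univ_three] <;>
    grind [I_sq, ofReal_sqrt_three_sq, ofReal_sqrt_three_ne_zero]

theorem Amat_mul_Bmat_mulVec_p₄ : (Amat * Bmat) *ᵥ p₄ = p₄ := by
  ext i
  fin_cases i <;> simp [Bmat, Amat, p₄, mulVec, dotProduct, Fin.sum_univ_three] <;>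
    grind [I_sq, ofReal_sqrt_three_sq, ofReal_sqrt_three_ne_zero]

theorem parabolic_elements_and_fixed_points :
    (IsUnipotentNontrivial (Bmat⁻¹ * Amat) ∧ herm p₁ p₁ = 0 ∧
      (Bmat⁻¹ * Amat) *ᵥ p₁ = p₁) ∧
    (IsUnipotentNontrivial (Bmat * Amat⁻¹) ∧ herm p₂ p₂ = 0 ∧
      (Bmat * Amat⁻¹) *ᵥ p₂ = p₂) ∧
    (IsUnipotentNontrivial (Bmat * Amat) ∧ herm p₃ p₃ = 0 ∧
      (Bmat * Amat) *ᵥ p₃ = p₃) ∧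
    (IsUnipotentNontrivial (Amat * Bmat) ∧ herm p₄ p₄ = 0 ∧
      (Amat * Bmat) *ᵥ p₄ = p₄) :=
  ⟨⟨isUnipotentNontrivial_Bmat_inv_mul_Amat, herm_p₁_self, Bmat_inv_mul_Amat_mulVec_p₁⟩,
    ⟨isUnipotentNontrivial_Bmat_mul_Amat_inv, herm_p₂_self, Bmat_mul_Amat_inv_mulVec_p₂⟩,
    ⟨isUnipotentNontrivial_Bmat_mul_Amat, herm_p₃_self, Bmat_mul_Amat_mulVec_p₃⟩,
    ⟨isUnipotentNontrivial_Amat_mul_Bmat, herm_p₄_self, Amat_mul_Bmat_mulVec_p₄⟩⟩
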